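/- Let Ω ⊆ ℝ³ be open and ν₁, ν₂ : Ω → ℝ be C¹ functions with ν₁² + ν₂² = 1 on Ω; set H = Xν₁ + Yν₂. Let γ = (x,y,t) : I → Ω be a C¹ curve with ẋ = −ν₂∘γ, ẏ = ν₁∘γ and ṫ = 2(yẋ − xẏ) on I (an integral curve of 𝕁ν^h = −ν₂X + ν₁Y). Then ν₁∘γ and ν₂∘γ are differentiable with (ν₁∘γ)′ = −(ν₂∘γ)·(H∘γ) and (ν₂∘γ)′ = (ν₁∘γ)·(H∘γ); consequently x and y are C² and the signed curvature of the projection of γ to the plane satisfies ẋÿ − ẏẍ = H∘γ on I. (The horizontal mean curvature at a noncharacteristic point equals the signed curvature of the projection to ℂ of the leaf of the horizontal flow through that point.) -/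

import Mathlib

/-!
Differentiating ν₁² + ν₂² = 1 gives ν₁ Xν₁ + ν₂ Xν₂ = 0 and ν₁ Yν₁ + ν₂ Yν₂ = 0. The derivative
of νᵢ along 𝕁ν^h is −ν₂ Xνᵢ + ν₁ Yνᵢ, and these two relations turn it into −ν₂ H for i = 1 and
ν₁ H for i = 2. So the unit tangent (ẋ, ẏ) = (−ν₂, ν₁) of the projected curve rotates with speed H,
which is the Frenet equation saying that its signed curvature is H.
-/

/-- The Heisenberg horizontal vector field X = ∂/∂x + 2y ∂/∂t acting on a function
of (x,y,t) ∈ ℝ³. -/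
noncomputable def Xop (f : ℝ × ℝ × ℝ → ℝ) (p : ℝ × ℝ × ℝ) : ℝ :=
  deriv (fun x => f (x, p.2.1, p.2.2)) p.1
    + 2 * p.2.1 * deriv (fun t => f (p.1, p.2.1, t)) p.2.2

/-- The Heisenberg horizontal vector field Y = ∂/∂y − 2x ∂/∂t acting on a function
of (x,y,t) ∈ ℝ³. -/
noncomputable def Yop (f : ℝ × ℝ × ℝ → ℝ) (p : ℝ × ℝ × ℝ) : ℝ :=
  deriv (fun y => f (p.1, y, p.2.2)) p.2.1
    - 2 * p.1 * deriv (fun t => f (p.1, p.2.1, t)) p.2.2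

open Filter Topology

/-- The vector `a X_p + b Y_p` in the coordinates of `ℝ³`. -/
def horizontalVector (p : ℝ × ℝ × ℝ) (a b : ℝ) : ℝ × ℝ × ℝ :=
  (a, b, 2 * (p.2.1 * a - p.1 * b))

noncomputable def horizontalMeanCurvature (ν₁ ν₂ : ℝ × ℝ × ℝ → ℝ) (p : ℝ × ℝ × ℝ) : ℝ :=
  Xop ν₁ p + Yop ν₂ p

section HorizontalDerivatives

variable {f : ℝ × ℝ × ℝ → ℝ} {D : ℝ × ℝ × ℝ →L[ℝ] ℝ} {p : ℝ × ℝ × ℝ}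

theorem Xop_eq_of_hasFDerivAt (hf : HasFDerivAt f D p) : Xop f p = D (1, 0, 2 * p.2.1) := by
  have hx : deriv (fun u => f (u, p.2.1, p.2.2)) p.1 = D (1, 0, 0) :=
    (hf.comp_hasDerivAt p.1
      ((hasDerivAt_id _).prodMk ((hasDerivAt_const _ _).prodMk (hasDerivAt_const _ _)))).deriv
  have ht : deriv (fun u => f (p.1, p.2.1, u)) p.2.2 = D (0, 0, 1) :=
    (hf.comp_hasDerivAt p.2.2
      ((hasDerivAt_const _ _).prodMk ((hasDerivAt_const _ _).prodMk (hasDerivAt_id _)))).deriv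
  have hdir : ((1 : ℝ), (0 : ℝ), 2 * p.2.1) = (1, 0, 0) + (2 * p.2.1) • (0, 0, 1) := by
    simp
  rw [Xop, hx, ht, hdir, map_add, map_smul, smul_eq_mul]

theorem Yop_eq_of_hasFDerivAt (hf : HasFDerivAt f D p) : Yop f p = D (0, 1, -(2 * p.1)) := by
  have hy : deriv (fun u => f (p.1, u, p.2.2)) p.2.1 = D (0, 1, 0) :=
    (hf.comp_hasDerivAt p.2.1
      ((hasDerivAt_const _ _).prodMk ((hasDerivAt_id _).prodMk (hasDerivAt_const _ _)))).deriv
  have ht : deriv (fun u => f (p.1, p.2.1, u)) p.2.2 = D (0, 0, 1) :=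
    (hf.comp_hasDerivAt p.2.2
      ((hasDerivAt_const _ _).prodMk ((hasDerivAt_const _ _).prodMk (hasDerivAt_id _)))).deriv
  have hdir : ((0 : ℝ), (1 : ℝ), -(2 * p.1)) = (0, 1, 0) - (2 * p.1) • (0, 0, 1) := by
    simp
  rw [Yop, hy, ht, hdir, map_sub, map_smul, smul_eq_mul]

theorem HasFDerivAt.apply_horizontalVector (hf : HasFDerivAt f D p) (a b : ℝ) :
    D (horizontalVector p a b) = a * Xop f p + b * Yop f p := by
  have hdir : horizontalVector p a b = a • (1, 0, 2 * p.2.1) + b • (0, 1, -(2 * p.1)) := by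
    simp only [horizontalVector, Prod.ext_iff, Prod.fst_add, Prod.snd_add, Prod.smul_fst,
      Prod.smul_snd, smul_eq_mul]
    refine ⟨by ring, by ring, by ring⟩
  rw [hdir, map_add, map_smul, map_smul, smul_eq_mul, smul_eq_mul,
    Xop_eq_of_hasFDerivAt hf, Yop_eq_of_hasFDerivAt hf]

end HorizontalDerivatives

theorem mul_apply_add_mul_apply_eq_zero_of_sq_add_sq {E : Type*} [NormedAddCommGroup E]
    [NormedSpace ℝ E] {f g : E → ℝ} {f' g' : E →L[ℝ] ℝ} {p : E} {c : ℝ}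
    (hf : HasFDerivAt f f' p) (hg : HasFDerivAt g g' p)
    (hc : ∀ᶠ q in 𝓝 p, f q ^ 2 + g q ^ 2 = c) (v : E) :
    f p * f' v + g p * g' v = 0 := by
  have hsum : HasFDerivAt (fun q => f q ^ 2 + g q ^ 2) _ p := (hf.pow 2).add (hg.pow 2)
  have hv := DFunLike.congr_fun
    (hsum.unique ((hasFDerivAt_const c p).congr_of_eventuallyEq hc)) v
  simp only [_root_.add_apply, _root_.smul_apply, smul_eq_mul,
    _root_.zero_apply, nsmul_eq_mul, Nat.cast_ofNat, Nat.add_one_sub_one, pow_one] at hv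
  linarith

theorem hasDerivAt_comp_of_hasDerivAt_horizontalVector {ν₁ ν₂ : ℝ × ℝ × ℝ → ℝ}
    {D₁ D₂ : ℝ × ℝ × ℝ →L[ℝ] ℝ} {γ : ℝ → ℝ × ℝ × ℝ} {s : ℝ}
    (h₁ : HasFDerivAt ν₁ D₁ (γ s)) (h₂ : HasFDerivAt ν₂ D₂ (γ s))
    (hunit : ∀ᶠ q in 𝓝 (γ s), ν₁ q ^ 2 + ν₂ q ^ 2 = 1)
    (hγ : HasDerivAt γ (horizontalVector (γ s) (-ν₂ (γ s)) (ν₁ (γ s))) s) :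
    HasDerivAt (fun τ => ν₁ (γ τ))
        (-ν₂ (γ s) * horizontalMeanCurvature ν₁ ν₂ (γ s)) s ∧
      HasDerivAt (fun τ => ν₂ (γ τ))
        (ν₁ (γ s) * horizontalMeanCurvature ν₁ ν₂ (γ s)) s := by
  set p := γ s
  have hX := mul_apply_add_mul_apply_eq_zero_of_sq_add_sq h₁ h₂ hunit (1, 0, 2 * p.2.1)
  have hY := mul_apply_add_mul_apply_eq_zero_of_sq_add_sq h₁ h₂ hunit (0, 1, -(2 * p.1))
  rw [← Xop_eq_of_hasFDerivAt h₁, ← Xop_eq_of_hasFDerivAt h₂] at hX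
  rw [← Yop_eq_of_hasFDerivAt h₁, ← Yop_eq_of_hasFDerivAt h₂] at hY
  constructor
  · refine (h₁.comp_hasDerivAt s hγ).congr_deriv ?_
    rw [h₁.apply_horizontalVector, horizontalMeanCurvature]
    linear_combination hY
  · refine (h₂.comp_hasDerivAt s hγ).congr_deriv ?_
    rw [h₂.apply_horizontalVector, horizontalMeanCurvature]
    linear_combination -hX

theorem signedCurvature_eq_of_frenet {x y a b : ℝ → ℝ} {s κ : ℝ}
    (hx : deriv x =ᶠ[𝓝 s] a) (hy : deriv y =ᶠ[𝓝 s] b)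
    (ha : HasDerivAt a (-b s * κ) s) (hb : HasDerivAt b (a s * κ) s)
    (hunit : a s ^ 2 + b s ^ 2 = 1) :
    deriv x s * deriv (deriv y) s - deriv y s * deriv (deriv x) s = κ := by
  rw [hx.eq_of_nhds, hy.eq_of_nhds, hx.deriv_eq, hy.deriv_eq, ha.deriv, hb.deriv]
  linear_combination κ * hunit

/-- along an integral curve γ of 𝕁ν^h = −ν₂X + ν₁Y one has
(ν₁∘γ)′ = −(ν₂∘γ)(H∘γ), (ν₂∘γ)′ = (ν₁∘γ)(H∘γ) with H = Xν₁ + Yν₂, and the signed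
curvature of the projection of γ to the plane equals H∘γ: ẋÿ − ẏẍ = H∘γ on I. -/
theorem stmt_6 (Ω : Set (ℝ × ℝ × ℝ)) (hΩ : IsOpen Ω)
    (ν₁ ν₂ : ℝ × ℝ × ℝ → ℝ)
    (hν₁ : ContDiffOn ℝ 1 ν₁ Ω) (hν₂ : ContDiffOn ℝ 1 ν₂ Ω)
    (hunit : ∀ p ∈ Ω, ν₁ p ^ 2 + ν₂ p ^ 2 = 1)
    (I : Set ℝ) (hI : IsOpen I)
    (x y t : ℝ → ℝ)
    (hmem : ∀ s ∈ I, (x s, y s, t s) ∈ Ω)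
    (hdx : ∀ s ∈ I, HasDerivAt x (-(ν₂ (x s, y s, t s))) s)
    (hdy : ∀ s ∈ I, HasDerivAt y (ν₁ (x s, y s, t s)) s)
    (hdt : ∀ s ∈ I, HasDerivAt t
      (2 * (y s * (-(ν₂ (x s, y s, t s))) - x s * ν₁ (x s, y s, t s))) s) :
    ∀ s ∈ I,
      HasDerivAt (fun τ => ν₁ (x τ, y τ, t τ))
        (-(ν₂ (x s, y s, t s))
          * (Xop ν₁ (x s, y s, t s) + Yop ν₂ (x s, y s, t s))) s ∧
      HasDerivAt (fun τ => ν₂ (x τ, y τ, t τ))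
        (ν₁ (x s, y s, t s)
          * (Xop ν₁ (x s, y s, t s) + Yop ν₂ (x s, y s, t s))) s ∧
      deriv x s * deriv (deriv y) s - deriv y s * deriv (deriv x) s
        = Xop ν₁ (x s, y s, t s) + Yop ν₂ (x s, y s, t s) := by
  intro s hs
  have hΩs : Ω ∈ 𝓝 (x s, y s, t s) := hΩ.mem_nhds (hmem s hs)
  have hIs : I ∈ 𝓝 s := hI.mem_nhds hs
  obtain ⟨h₁, h₂⟩ :=
    hasDerivAt_comp_of_hasDerivAt_horizontalVector (γ := fun τ => (x τ, y τ, t τ))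
    ((hν₁.contDiffAt hΩs).differentiableAt one_ne_zero).hasFDerivAt
    ((hν₂.contDiffAt hΩs).differentiableAt one_ne_zero).hasFDerivAt
    (eventually_of_mem hΩs hunit) ((hdx s hs).prodMk ((hdy s hs).prodMk (hdt s hs)))
  refine ⟨h₁, h₂, signedCurvature_eq_of_frenet (a := fun τ => -ν₂ (x τ, y τ, t τ))
    (b := fun τ => ν₁ (x τ, y τ, t τ)) ?_ ?_
    (h₂.neg.congr_deriv (by rw [horizontalMeanCurvature]; ring)) h₁ ?_⟩
  · filter_upwards [hIs] with τ hτ using (hdx τ hτ).deriv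
  · filter_upwards [hIs] with τ hτ using (hdy τ hτ).deriv
  · linear_combination hunit _ (hmem s hs)
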